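/- arXiv:1804.05804 — 5 statements merged into one kernel-verified Lean document; each statement's English description precedes it below -/
import Mathlib

section
/- If the update function U is stable under consistent perception (i.e., the guess does not change when new perception agrees with the guess), then the recursively-defined forward perception map F^U admits a closed form: the first component of F^U applied to (X_free^per, X_obs^per) and actions (σ₁,…,σ_k) equals X_free^per ∪ ⋃_{j=1}^k P₁(U(X_free^per, X_obs^per), end(σ_j)), and similarly for the second component with P₂. -/
/-- The forward perception map `F^U`, defined so that `FU AB [] = AB` and
`FU AB (s ++ [σ])` updates the pair by unioning in the perception `P₁`/`P₂`
of the guessed environment `U (FU AB s)` at `end(σ)`. (The cons-form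
recursion below is equivalent: it satisfies
`FU P₁ P₂ U endp AB (s ++ [σ]) = step (FU P₁ P₂ U endp AB s) σ`.) -/
def FU {Point Traj : Type*} (P₁ P₂ : Set Point → Point → Set Point)
    (U : Set Point × Set Point → Set Point) (endp : Traj → Point) :
    Set Point × Set Point → List Traj → Set Point × Set Point
  | AB, [] => AB
  | AB, σ :: s => FU P₁ P₂ U endp
      (AB.1 ∪ P₁ (U AB) (endp σ), AB.2 ∪ P₂ (U AB) (endp σ)) s

/-- If the update function `U` is stable under consistent perception (new
perception agreeing with the guess does not change the guess), then `F^U`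
admits the closed form
`F^U_1(A,B,(σ₁,…,σ_k)) = A ∪ ⋃_{j=1}^k P₁(U(A,B), end(σ_j))`, and similarly
for the second component with `P₂`. -/
theorem stmt_5 {Point Traj : Type*} (P₁ P₂ : Set Point → Point → Set Point)
    (U : Set Point × Set Point → Set Point) (endp : Traj → Point)
    (hstab : ∀ (AB : Set Point × Set Point) (x : Point),
      U (AB.1 ∪ P₁ (U AB) x, AB.2 ∪ P₂ (U AB) x) = U AB)
    (A B : Set Point) (s : List Traj) :
    (FU P₁ P₂ U endp (A, B) s).1 = A ∪ ⋃ σ ∈ s, P₁ (U (A, B)) (endp σ) ∧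
    (FU P₁ P₂ U endp (A, B) s).2 = B ∪ ⋃ σ ∈ s, P₂ (U (A, B)) (endp σ) := by
  induction s generalizing A B with
  | nil => simp [FU]
  | cons σ s ih =>
    have hU : U (A ∪ P₁ (U (A, B)) (endp σ), B ∪ P₂ (U (A, B)) (endp σ)) = U (A, B) :=
      hstab (A, B) (endp σ)
    obtain ⟨h1, h2⟩ := ih (A ∪ P₁ (U (A, B)) (endp σ)) (B ∪ P₂ (U (A, B)) (endp σ))
    rw [hU] at h1 h2
    constructor
    · rw [show FU P₁ P₂ U endp (A, B) (σ :: s)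
        = FU P₁ P₂ U endp (A ∪ P₁ (U (A, B)) (endp σ), B ∪ P₂ (U (A, B)) (endp σ)) s
        from rfl, h1]
      simp [Set.union_assoc]
    · rw [show FU P₁ P₂ U endp (A, B) (σ :: s)
        = FU P₁ P₂ U endp (A ∪ P₁ (U (A, B)) (endp σ), B ∪ P₂ (U (A, B)) (endp σ)) s
        from rfl, h2]
      simp [Set.union_assoc]
end

section
/- If the update function always returns the true environment (U ≡ F_true) whenever its inputs are consistent with F_true, and the perception inputs fed to F^U come from F_true, then the hypothetical perceived free space produced by F^U along any action sequence equals the actual perceived free space: F^U_1(P₁(F_true, x₀), P₂(F_true, x₀), (σ₁,…,σ_k)) = ⋃_{j=0}^k P₁(F_true, end(σ_j)) (with end(σ₀) = x₀). -/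
lemma FU_aux {Point Traj : Type*} (P₁ P₂ : Set Point → Point → Set Point)
    (U : Set Point × Set Point → Set Point) (endp : Traj → Point)
    (Ftrue : Set Point)
    (hU : ∀ S : Set Point, S.Nonempty →
      U (⋃ x ∈ S, P₁ Ftrue x, ⋃ x ∈ S, P₂ Ftrue x) = Ftrue) :
    ∀ (s : List Traj) (L : List Point), L ≠ [] →
      FU P₁ P₂ U endp (⋃ x ∈ L, P₁ Ftrue x, ⋃ x ∈ L, P₂ Ftrue x) s =
        (⋃ x ∈ L ++ s.map endp, P₁ Ftrue x, ⋃ x ∈ L ++ s.map endp, P₂ Ftrue x) := by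
  intro s
  induction s with
  | nil => intro L hL; simp [FU]
  | cons σ t ih =>
    intro L hL
    have hne : ({x | x ∈ L} : Set Point).Nonempty := by
      cases L with
      | nil => exact absurd rfl hL
      | cons a l => exact ⟨a, by simp⟩
    have hUeq : U (⋃ x ∈ L, P₁ Ftrue x, ⋃ x ∈ L, P₂ Ftrue x) = Ftrue := by
      have := hU {x | x ∈ L} hne
      simpa using this
    have step : FU P₁ P₂ U endp (⋃ x ∈ L, P₁ Ftrue x, ⋃ x ∈ L, P₂ Ftrue x) (σ :: t)
        = FU P₁ P₂ U endp
            (⋃ x ∈ L ++ [endp σ], P₁ Ftrue x, ⋃ x ∈ L ++ [endp σ], P₂ Ftrue x) t := by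
      simp only [FU, hUeq]
      congr 2 <;> · ext y; simp [or_comm]
    rw [step, ih (L ++ [endp σ]) (by simp)]
    simp

/-- If `U` returns the true environment whenever its inputs are consistent
with it (i.e., `U` of a pair of unions of true perceptions equals `Ftrue`),
then the hypothetical perceived free space produced by `F^U` along any action
sequence equals the actual perceived free space:
`F^U_1(P₁(Ftrue,x₀), P₂(Ftrue,x₀), (σ₁,…,σ_k)) = ⋃_{j=0}^k P₁(Ftrue, end(σ_j))`
with `end(σ₀) = x₀`. -/
theorem stmt_7 {Point Traj : Type*} (P₁ P₂ : Set Point → Point → Set Point)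
    (U : Set Point × Set Point → Set Point) (endp : Traj → Point)
    (Ftrue : Set Point) (x₀ : Point)
    (hU : ∀ S : Set Point, S.Nonempty →
      U (⋃ x ∈ S, P₁ Ftrue x, ⋃ x ∈ S, P₂ Ftrue x) = Ftrue)
    (s : List Traj) :
    (FU P₁ P₂ U endp (P₁ Ftrue x₀, P₂ Ftrue x₀) s).1 =
      P₁ Ftrue x₀ ∪ ⋃ σ ∈ s, P₁ Ftrue (endp σ) := by
  have h := FU_aux P₁ P₂ U endp Ftrue hU s [x₀] (by simp)
  simp only [List.mem_singleton, Set.iUnion_iUnion_eq_left] at h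
  rw [h]
  ext y
  simp
end

section
/- Tightness of the benchmark: under the assumptions that U returns the true free space when consistent with it, the optimal cost-to-go c̃*_U from x₀ with initial perception P(F_true, x₀) equals the benchmark cost c̃*(F_true, x₀, Goal). -/
section

variable {Point Traj : Type*} (P₁ P₂ : Set Point → Point → Set Point)

def perceptionOn (F S : Set Point) : Set Point × Set Point :=
  (⋃ x ∈ S, P₁ F x, ⋃ x ∈ S, P₂ F x)

theorem perceptionOn_insert (F S : Set Point) (x : Point) :
    perceptionOn P₁ P₂ F (insert x S) =
      ((perceptionOn P₁ P₂ F S).1 ∪ P₁ F x, (perceptionOn P₁ P₂ F S).2 ∪ P₂ F x) := by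
  simp only [perceptionOn, Set.biUnion_insert, Set.union_comm]

variable {P₁ P₂} {U : Set Point × Set Point → Set Point} {F : Set Point}

theorem FU_perceptionOn (endp : Traj → Point)
    (hU : ∀ S : Set Point, S.Nonempty → U (perceptionOn P₁ P₂ F S) = F)
    (l : List Traj) {S : Set Point} (hS : S.Nonempty) :
    FU P₁ P₂ U endp (perceptionOn P₁ P₂ F S) l =
      perceptionOn P₁ P₂ F (S ∪ {x | x ∈ l.map endp}) := by
  induction l generalizing S with
  | nil => simp [FU]
  | cons σ s ih =>
    rw [FU, hU S hS, ← perceptionOn_insert, ih (hS.mono (Set.subset_insert _ _))]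
    congr 1
    ext x
    simp only [Set.mem_union, Set.mem_insert_iff, Set.mem_ofPred_eq, List.map_cons,
      List.mem_cons]
    tauto

theorem visited_eq_image_range (x₀ : Point) (endp : Traj → Point) (σ : ℕ → Traj) (m : ℕ) :
    {x₀} ∪ {x | x ∈ ((List.range m).map fun j => σ (j + 1)).map endp} =
      (fun j => if j = 0 then x₀ else endp (σ j)) '' ↑(Finset.range (m + 1)) := by
  ext x
  simp only [Set.mem_union, Set.mem_singleton_iff, Set.mem_ofPred_eq, List.map_map,
    List.mem_map, List.mem_range, Set.mem_image, Finset.coe_range, Set.mem_Iio]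
  rw [Nat.exists_lt_succ_left]
  simp [eq_comm]

theorem FU_fst_eq_biUnion_range (endp : Traj → Point)
    (hU : ∀ S : Set Point, S.Nonempty → U (perceptionOn P₁ P₂ F S) = F)
    (x₀ : Point) (σ : ℕ → Traj) {k : ℕ} (hk : 1 ≤ k) :
    (FU P₁ P₂ U endp (P₁ F x₀, P₂ F x₀) ((List.range (k - 1)).map fun j => σ (j + 1))).1 =
      ⋃ j ∈ Finset.range k, P₁ F (if j = 0 then x₀ else endp (σ j)) := by
  have hx₀ : (P₁ F x₀, P₂ F x₀) = perceptionOn P₁ P₂ F {x₀} := by simp [perceptionOn]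
  obtain ⟨m, rfl⟩ := Nat.exists_eq_add_of_le' hk
  rw [hx₀, FU_perceptionOn endp hU _ (Set.singleton_nonempty x₀), Nat.add_sub_cancel,
    visited_eq_image_range, perceptionOn, Set.biUnion_image]
  simp only [Finset.mem_coe]

end

/-- Tightness of the benchmark: if `U` returns the true free space whenever
its inputs are perception histories generated from `Ftrue`, then the optimal
cost-to-go `c̃*_U` from `x₀` with initial perception `P(Ftrue, x₀)` (ICS
constraints driven by `F^U`) equals the benchmark cost `c̃*(Ftrue, x₀, Goal)`
(ICS constraints driven by the true accumulated perception). Plans are pairs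
`(N, σ)` with actions `σ 1, …, σ N`, endpoint convention `end(σ₀) = x₀`. -/
theorem stmt_8 {Point Traj : Type*}
    (A : Point → Set Traj) (rng : Traj → Set Point) (endp : Traj → Point)
    (c : Traj → ENNReal)
    (P₁ P₂ : Set Point → Point → Set Point)
    (U : Set Point × Set Point → Set Point)
    (ICS : Set Point → Set Point)
    (Ftrue Goal : Set Point) (x₀ : Point)
    (hU : ∀ S : Set Point, S.Nonempty →
      U (⋃ x ∈ S, P₁ Ftrue x, ⋃ x ∈ S, P₂ Ftrue x) = Ftrue) :
    (⨅ p : {p : ℕ × (ℕ → Traj) //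
        (∀ k, 1 ≤ k → k ≤ p.1 →
          p.2 k ∈ A (if k = 1 then x₀ else endp (p.2 (k - 1))) ∧
          rng (p.2 k) ∩ ICS ((FU P₁ P₂ U endp (P₁ Ftrue x₀, P₂ Ftrue x₀)
            ((List.range (k - 1)).map fun j => p.2 (j + 1))).1) = ∅) ∧
        (if p.1 = 0 then x₀ else endp (p.2 p.1)) ∈ Goal},
      ∑ k ∈ Finset.Icc 1 p.1.1, c (p.1.2 k)) =
    (⨅ p : {p : ℕ × (ℕ → Traj) //
        (∀ k, 1 ≤ k → k ≤ p.1 →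
          p.2 k ∈ A (if k = 1 then x₀ else endp (p.2 (k - 1))) ∧
          rng (p.2 k) ∩ ICS (⋃ j ∈ Finset.range k,
            P₁ Ftrue (if j = 0 then x₀ else endp (p.2 j))) = ∅) ∧
        (if p.1 = 0 then x₀ else endp (p.2 p.1)) ∈ Goal},
      ∑ k ∈ Finset.Icc 1 p.1.1, c (p.1.2 k)) := by
  refine Equiv.iInf_congr (e := Equiv.subtypeEquivRight fun p => ?_) fun _ => rfl
  refine and_congr_left' (forall₂_congr fun k hk => ?_)
  rw [FU_fst_eq_biUnion_range endp hU x₀ p.2 hk]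
end

section
/- For a one-dimensional double integrator with bounded deceleration, the set of inevitable collision states with respect to free space F = (-∞, w) (a wall at position w) is exactly {(p, v) : v > 0 and p + v²/(2a_max) ≥ w} ∪ {(p,v) : p ≥ w}, i.e., states whose minimum stopping distance overshoots the wall. -/
/-!
Under full braking `u = -a` the position is `p + v t - a t²/2`, which reaches its maximum
`p + v²/(2a)` at the stopping time `t = v/a` and never exceeds `p` for `t ≥ 0` when `v ≤ 0`;
so if `p < w` and either `v ≤ 0` or `p + v²/(2a) < w`, full braking avoids the wall forever.
Conversely, comparing derivatives twice (`u ≥ -a` gives `vel ≥ v - a t`, which gives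
`pos ≥ p + v t - a t²/2`) shows that no admissible control stops sooner than full braking,
so if `v > 0` and `p + v²/(2a) ≥ w` every trajectory reaches the wall by time `v/a`.
-/

theorem le_of_hasDerivAt_le {f g f' g' : ℝ → ℝ} {x y : ℝ}
    (hf : ∀ t, HasDerivAt f (f' t) t) (hg : ∀ t, HasDerivAt g (g' t) t)
    (hx : f x ≤ g x) (hle : ∀ t ∈ Set.Ico x y, f' t ≤ g' t) (hxy : x ≤ y) : f y ≤ g y :=
  image_le_of_deriv_right_le_deriv_boundary
    (fun t _ => (hf t).continuousAt.continuousWithinAt) (fun t _ => (hf t).hasDerivWithinAt) hx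
    (fun t _ => (hg t).continuousAt.continuousWithinAt) (fun t _ => (hg t).hasDerivWithinAt) hle
    ⟨hxy, le_rfl⟩

noncomputable def brakingPos (a p v t : ℝ) : ℝ := p + v * t - a / 2 * t ^ 2

theorem hasDerivAt_brakingPos (a p v t : ℝ) : HasDerivAt (brakingPos a p v) (v - a * t) t := by
  have h : HasDerivAt (fun s : ℝ => p + v * s - a / 2 * s ^ 2)
      (v * 1 - a / 2 * (↑2 * t ^ 1)) t :=
    (((hasDerivAt_id t).const_mul v).const_add p).sub ((hasDerivAt_pow 2 t).const_mul (a / 2))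
  exact h.congr_deriv (by ring)

theorem hasDerivAt_brakingVel (a v t : ℝ) : HasDerivAt (fun s => v - a * s) (-a) t := by
  have h : HasDerivAt (fun s : ℝ => v - a * s) (0 - a * 1) t :=
    (hasDerivAt_const t v).sub ((hasDerivAt_id t).const_mul a)
  exact h.congr_deriv (by ring)

theorem brakingPos_stoppingTime {a : ℝ} (ha : a ≠ 0) (p v : ℝ) :
    brakingPos a p v (v / a) = p + v ^ 2 / (2 * a) := by
  unfold brakingPos
  field_simp
  ring

theorem brakingPos_le_stoppingPos {a : ℝ} (ha : 0 < a) (p v t : ℝ) :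
    brakingPos a p v t ≤ p + v ^ 2 / (2 * a) := by
  have h : p + v ^ 2 / (2 * a) - brakingPos a p v t = (a * t - v) ^ 2 / (2 * a) := by
    unfold brakingPos
    field_simp
    ring
  have : 0 ≤ (a * t - v) ^ 2 / (2 * a) := by positivity
  linarith

theorem brakingPos_le_of_nonpos {a v : ℝ} (ha : 0 ≤ a) (hv : v ≤ 0) (p : ℝ) {t : ℝ}
    (ht : 0 ≤ t) : brakingPos a p v t ≤ p := by
  unfold brakingPos
  nlinarith [mul_nonpos_of_nonpos_of_nonneg hv ht, sq_nonneg t]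

theorem brakingPos_le_of_hasDerivAt {a : ℝ} {pos vel u : ℝ → ℝ}
    (hpos : ∀ t, HasDerivAt pos (vel t) t) (hvel : ∀ t, HasDerivAt vel (u t) t)
    (hu : ∀ t, -a ≤ u t) {t : ℝ} (ht : 0 ≤ t) : brakingPos a (pos 0) (vel 0) t ≤ pos t := by
  have hvel_ge : ∀ s, 0 ≤ s → vel 0 - a * s ≤ vel s := fun s hs =>
    le_of_hasDerivAt_le (f := fun s => vel 0 - a * s) (hasDerivAt_brakingVel a (vel 0)) hvel
      (by simp) (fun r _ => hu r) hs
  exact le_of_hasDerivAt_le (hasDerivAt_brakingPos a (pos 0) (vel 0)) hpos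
    (by simp [brakingPos]) (fun s hs => hvel_ge s hs.1) ht

/-- For a one-dimensional double integrator `p'' = u`, `|u| ≤ a`, with free
space `F = {(p,v) : p < w}` (a wall at `w`), the set of inevitable collision
states is exactly
`{(p,v) : p ≥ w} ∪ {(p,v) : v > 0 ∧ p + v²/(2a) ≥ w}`:
states whose minimum stopping distance overshoots the wall. A state is in
`ICS(F)` iff there is a time horizon `T ≥ 0` such that every admissible
trajectory `(pos, vel, u)` starting at `(p, v)` reaches position `≥ w` by
time `T`. -/
theorem stmt_15 (a w : ℝ) (ha : 0 < a) (p v : ℝ) :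
    (∃ T : ℝ, 0 ≤ T ∧ ∀ pos vel u : ℝ → ℝ,
      pos 0 = p → vel 0 = v →
      (∀ t, HasDerivAt pos (vel t) t) →
      (∀ t, HasDerivAt vel (u t) t) →
      (∀ t, |u t| ≤ a) →
      ∃ t, 0 ≤ t ∧ t ≤ T ∧ w ≤ pos t) ↔
    (w ≤ p ∨ (0 < v ∧ w ≤ p + v ^ 2 / (2 * a))) := by
  constructor
  · rintro ⟨T, -, h⟩
    by_contra! hsafe
    obtain ⟨t, ht, -, hwall⟩ := h (brakingPos a p v) (fun s => v - a * s) (fun _ => -a)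
      (by simp [brakingPos]) (by simp) (hasDerivAt_brakingPos a p v) (hasDerivAt_brakingVel a v)
      (fun _ => by rw [abs_neg, abs_of_pos ha])
    rcases lt_or_ge 0 v with hv | hv
    · linarith [hsafe.2 hv, brakingPos_le_stoppingPos ha p v t]
    · linarith [hsafe.1, brakingPos_le_of_nonpos ha.le hv p ht]
  · rintro (hp | ⟨hv, hw⟩)
    · exact ⟨0, le_rfl, fun pos _ _ hp0 _ _ _ _ => ⟨0, le_rfl, le_rfl, hp0 ▸ hp⟩⟩
    · refine ⟨v / a, by positivity, fun pos vel u hp0 hv0 hpos hvel hu => ?_⟩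
      refine ⟨v / a, by positivity, le_rfl, ?_⟩
      have hbrake := brakingPos_le_of_hasDerivAt hpos hvel (fun t => (abs_le.mp (hu t)).1)
        (t := v / a) (by positivity)
      rw [hp0, hv0, brakingPos_stoppingTime ha.ne'] at hbrake
      linarith
end

section
/- Composition of safe segments is safe: if a plan σ₁,…,σ_m satisfies the ICS-avoidance constraints with perception history starting from x₀, and a subsequent plan σ_{m+1},…,σ_N satisfies the ICS-avoidance constraints with perception history that includes all perception gathered during the first segment, then the concatenated plan σ₁,…,σ_N satisfies the ICS-avoidance constraints of the full problem from x₀. -/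
/-- Composition of safe segments is safe: if actions `σ 1, …, σ m` satisfy the
ICS-avoidance constraints with perception history starting from `x₀`, and the
subsequent actions `σ (m+1), …, σ N` satisfy the ICS-avoidance constraints
with perception history `H ∪ ⋃_{j=m}^{k-1} P₁(F, end(σ_j))` where
`H = ⋃_{j=0}^{m-1} P₁(F, end(σ_j))` is all perception gathered during the
first segment, then the concatenated plan `σ 1, …, σ N` satisfies the
ICS-avoidance constraints of the full problem from `x₀`
(endpoint convention `end(σ₀) = x₀`). -/
theorem stmt_17 {Point Traj : Type*}
    (AD : Point → Set Traj) (rng : Traj → Set Point) (endp : Traj → Point)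
    (P₁ : Set Point → Point → Set Point)
    (ICS : Set Point → Set Point)
    (F : Set Point) (x₀ : Point) (m N : ℕ) (σ : ℕ → Traj)
    (hmN : m ≤ N)
    (hanti : ∀ G H : Set Point, G ⊆ H → ICS H ⊆ ICS G)
    (hseg1 : ∀ k, 1 ≤ k → k ≤ m →
      σ k ∈ AD (if k = 1 then x₀ else endp (σ (k - 1))) ∧
      rng (σ k) ∩ ICS (⋃ j ∈ Finset.range k,
        P₁ F (if j = 0 then x₀ else endp (σ j))) = ∅)
    (hseg2 : ∀ k, m + 1 ≤ k → k ≤ N →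
      σ k ∈ AD (if k = 1 then x₀ else endp (σ (k - 1))) ∧
      rng (σ k) ∩ ICS ((⋃ j ∈ Finset.range m,
          P₁ F (if j = 0 then x₀ else endp (σ j))) ∪
        ⋃ j ∈ Finset.Ico m k, P₁ F (if j = 0 then x₀ else endp (σ j))) = ∅) :
    ∀ k, 1 ≤ k → k ≤ N →
      σ k ∈ AD (if k = 1 then x₀ else endp (σ (k - 1))) ∧
      rng (σ k) ∩ ICS (⋃ j ∈ Finset.range k,
        P₁ F (if j = 0 then x₀ else endp (σ j))) = ∅ := by
  intro k hk1 hkN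
  by_cases hkm : k ≤ m
  · exact hseg1 k hk1 hkm
  · push_neg at hkm
    obtain ⟨h1, h2⟩ := hseg2 k hkm hkN
    refine ⟨h1, ?_⟩
    have heq : (⋃ j ∈ Finset.range m, P₁ F (if j = 0 then x₀ else endp (σ j))) ∪
        (⋃ j ∈ Finset.Ico m k, P₁ F (if j = 0 then x₀ else endp (σ j))) =
        ⋃ j ∈ Finset.range k, P₁ F (if j = 0 then x₀ else endp (σ j)) := by
      ext x
      simp only [Set.mem_union, Set.mem_iUnion, Finset.mem_range, Finset.mem_Ico]
      constructor
      · rintro (⟨i, hi, hx⟩ | ⟨i, ⟨h1, h2⟩, hx⟩)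
        · exact ⟨i, by omega, hx⟩
        · exact ⟨i, by omega, hx⟩
      · rintro ⟨i, hi, hx⟩
        by_cases him : i < m
        · exact Or.inl ⟨i, him, hx⟩
        · exact Or.inr ⟨i, ⟨by omega, by omega⟩, hx⟩
    rw [heq] at h2
    exact h2
end
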